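/- Let T be a closed subset of an association scheme S with O^ϑ(S) ∪ S_{p'} ⊆ T, where S_{p'} = {R_i ∈ S : p ∤ k_i}. Let V_T = {0 ≤ i ≤ d : R_i ∈ T} and w_T = Σ_{i ∈ V_T} A̅_i ∈ 𝔽S. Then ⟨w_T⟩_𝔽 is a trivial 𝔽S-submodule of the regular 𝔽S-module, i.e. A̅_a w_T = k̅_a w_T for every 0 ≤ a ≤ d. -/
import Mathlib


open scoped Classical

/-- An association scheme of class `d` on a nonempty finite set `X`:
a partition of `X × X` into nonempty relations `r 0, …, r d` with
`r 0` the diagonal, closed under converse (`star`), and with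
intersection numbers `pNum i j k`. -/
structure AssocScheme (X : Type*) [Fintype X] [Nonempty X] (d : ℕ) where
  r : Fin (d + 1) → Set (X × X)
  r_nonempty : ∀ i, (r i).Nonempty
  existsUnique_rel : ∀ q : X × X, ∃! i, q ∈ r i
  r_zero : r 0 = {q : X × X | q.1 = q.2}
  star : Fin (d + 1) → Fin (d + 1)
  mem_star : ∀ (i : Fin (d + 1)) (q : X × X), q ∈ r (star i) ↔ (q.2, q.1) ∈ r i
  pNum : Fin (d + 1) → Fin (d + 1) → Fin (d + 1) → ℕ
  ncard_eq : ∀ (i j k : Fin (d + 1)), ∀ q ∈ r k,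
    {z : X | (q.1, z) ∈ r i ∧ (z, q.2) ∈ r j}.ncard = pNum i j k

namespace AssocScheme

variable {X : Type*} [Fintype X] [Nonempty X] {d : ℕ}

/-- The valency `k_i = p_{i i*}^0` of the relation `R_i`. -/
def val (S : AssocScheme X d) (i : Fin (d + 1)) : ℕ := S.pNum i (S.star i) 0

/-- The complex product `UV = {R_k : p_{uv}^k > 0 for some R_u ∈ U, R_v ∈ V}`. -/
def cmul (S : AssocScheme X d) (U V : Set (Fin (d + 1))) : Set (Fin (d + 1)) :=
  {k | ∃ u ∈ U, ∃ v ∈ V, 0 < S.pNum u v k}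

/-- A nonempty subset `T` is closed if `T*T ⊆ T`. -/
def IsClosedSubset (S : AssocScheme X d) (T : Set (Fin (d + 1))) : Prop :=
  T.Nonempty ∧ S.cmul (S.star '' T) T ⊆ T

/-- The thin radical `O_ϑ(S) = {R_i : k_i = 1}`. -/
def thinRadical (S : AssocScheme X d) : Set (Fin (d + 1)) := {i | S.val i = 1}

/-- A closed subset `T` is strongly normal if `R_{i*} T R_i ⊆ T` for all `i`. -/
def IsStronglyNormal (S : AssocScheme X d) (T : Set (Fin (d + 1))) : Prop :=
  S.IsClosedSubset T ∧ ∀ i : Fin (d + 1), S.cmul (S.cmul {S.star i} T) {i} ⊆ T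

/-- The thin residue `O^ϑ(S)`: the intersection of all strongly normal closed subsets. -/
def thinResidue (S : AssocScheme X d) : Set (Fin (d + 1)) :=
  ⋂₀ {T | S.IsStronglyNormal T}

/-- `⟨H⟩`: the intersection of all closed subsets containing `H`. -/
def closure (S : AssocScheme X d) (H : Set (Fin (d + 1))) : Set (Fin (d + 1)) :=
  ⋂₀ {T | S.IsClosedSubset T ∧ H ⊆ T}

/-- The adjacency matrix `A̅_i` of `R_i`, with entries in `𝔽`. -/
noncomputable def adj (S : AssocScheme X d) (𝔽 : Type*) [Field 𝔽] (i : Fin (d + 1)) :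
    Matrix X X 𝔽 :=
  Matrix.of fun x y => if (x, y) ∈ S.r i then 1 else 0

/-- `v` spans a trivial `𝔽S`-submodule of the regular `𝔽S`-module:
`v` is a nonzero element of `𝔽S` with `A̅_i v = k̅_i v` for all `i`. -/
def IsTrivialVector (S : AssocScheme X d) (𝔽 : Type*) [Field 𝔽] (v : Matrix X X 𝔽) : Prop :=
  v ≠ 0 ∧ v ∈ Submodule.span 𝔽 (Set.range (S.adj 𝔽)) ∧
    ∀ i : Fin (d + 1), S.adj 𝔽 i * v = (S.val i : 𝔽) • v

/-- `S` is `p`-transitive over `𝔽` (of characteristic `p`) if the regular `𝔽S`-module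
contains a unique trivial `𝔽S`-submodule. -/
def IsPTransitive (S : AssocScheme X d) (𝔽 : Type*) [Field 𝔽] : Prop :=
  ∃! W : Submodule 𝔽 (Matrix X X 𝔽),
    ∃ v : Matrix X X 𝔽, S.IsTrivialVector 𝔽 v ∧ W = Submodule.span 𝔽 {v}

/-- A subset `T ⊆ S` is singular if `O_ϑ(S) ⊆ T` and
`R_x R_{y*} R_y R_z ⊆ T` for all `R_x ∈ O_ϑ(S)`, `R_y ∈ S`, `R_z ∈ T`. -/
def IsSingular (S : AssocScheme X d) (T : Set (Fin (d + 1))) : Prop :=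
  S.thinRadical ⊆ T ∧ ∀ x ∈ S.thinRadical, ∀ y : Fin (d + 1), ∀ z ∈ T,
    S.cmul (S.cmul (S.cmul {x} {S.star y}) {y}) {z} ⊆ T

/-- `S_{p'} = {R_i ∈ S : p ∤ k_i}`. -/
def pPrimePart (S : AssocScheme X d) (p : ℕ) : Set (Fin (d + 1)) :=
  {i | ¬ p ∣ S.val i}

end AssocScheme

namespace AssocScheme

variable {X : Type*} [Fintype X] [Nonempty X] {d : ℕ} (S : AssocScheme X d)

lemma rel_eq {i j : Fin (d + 1)} {q : X × X} (hi : q ∈ S.r i) (hj : q ∈ S.r j) : i = j := by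
  obtain ⟨k, _, hk⟩ := S.existsUnique_rel q
  rw [hk i hi, hk j hj]

lemma exists_rel (q : X × X) : ∃ i, q ∈ S.r i := (S.existsUnique_rel q).exists

lemma diag_mem (x : X) : (x, x) ∈ S.r 0 := by rw [S.r_zero]; rfl

lemma star_star (i : Fin (d + 1)) : S.star (S.star i) = i := by
  obtain ⟨q, hq⟩ := S.r_nonempty i
  have h2 : q ∈ S.r (S.star (S.star i)) := by
    rw [S.mem_star, S.mem_star]
    simpa using hq
  exact S.rel_eq h2 hq

lemma pNum_pos {i j k : Fin (d + 1)} {x z y : X} (hxz : (x, z) ∈ S.r i)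
    (hzy : (z, y) ∈ S.r j) (hxy : (x, y) ∈ S.r k) : 0 < S.pNum i j k := by
  rw [← S.ncard_eq i j k (x, y) hxy]
  exact (Set.ncard_pos (Set.toFinite _)).2 ⟨z, hxz, hzy⟩

lemma pNum_zero_mem_star (t : Fin (d + 1)) : 0 < S.pNum (S.star t) t 0 := by
  obtain ⟨⟨x, y⟩, hq⟩ := S.r_nonempty t
  exact S.pNum_pos ((S.mem_star t (y, x)).2 hq) hq (S.diag_mem y)

lemma pNum_star_zero (t : Fin (d + 1)) : 0 < S.pNum (S.star t) 0 (S.star t) := by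
  obtain ⟨⟨x, y⟩, hq⟩ := S.r_nonempty (S.star t)
  exact S.pNum_pos hq (S.diag_mem y) hq

lemma zero_mem_of_closed {T : Set (Fin (d + 1))} (hT : S.IsClosedSubset T) :
    (0 : Fin (d + 1)) ∈ T := by
  obtain ⟨t, ht⟩ := hT.1
  exact hT.2 ⟨S.star t, ⟨t, ht, rfl⟩, t, ht, S.pNum_zero_mem_star t⟩

lemma star_mem_of_closed {T : Set (Fin (d + 1))} (hT : S.IsClosedSubset T) {t : Fin (d + 1)}
    (ht : t ∈ T) : S.star t ∈ T :=
  hT.2 ⟨S.star t, ⟨t, ht, rfl⟩, 0, S.zero_mem_of_closed hT, S.pNum_star_zero t⟩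

lemma mul_mem_of_closed {T : Set (Fin (d + 1))} (hT : S.IsClosedSubset T) {s t m : Fin (d + 1)}
    (hs : s ∈ T) (ht : t ∈ T) {x z y : X}
    (hxz : (x, z) ∈ S.r s) (hzy : (z, y) ∈ S.r t) (hxy : (x, y) ∈ S.r m) : m ∈ T :=
  hT.2 ⟨s, ⟨S.star s, S.star_mem_of_closed hT hs, S.star_star s⟩, t, ht,
    S.pNum_pos hxz hzy hxy⟩

lemma mem_thinResidue_of_same_fiber {a m : Fin (d + 1)} {x z z' : X}
    (h1 : (x, z) ∈ S.r a) (h2 : (x, z') ∈ S.r a) (hm : (z, z') ∈ S.r m) :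
    m ∈ S.thinResidue := by
  rw [thinResidue, Set.mem_sInter]
  intro U hU
  have h0 : (0 : Fin (d + 1)) ∈ U := S.zero_mem_of_closed hU.1
  refine hU.2 a ⟨S.star a, ⟨S.star a, rfl, 0, h0, S.pNum_star_zero a⟩, a, rfl, ?_⟩
  exact S.pNum_pos ((S.mem_star a (z, x)).2 h1) h2 hm

lemma ncard_fiber (a : Fin (d + 1)) (x : X) : {z : X | (x, z) ∈ S.r a}.ncard = S.val a := by
  have h := S.ncard_eq a (S.star a) 0 (x, x) (S.diag_mem x)
  rw [val, ← h]
  congr 1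
  ext z
  simp only [Set.mem_setOf_eq]
  exact ⟨fun hz => ⟨hz, (S.mem_star a (z, x)).2 hz⟩, fun h => h.1⟩

lemma core_ncard (𝔽 : Type*) [Field 𝔽] (p : ℕ) [Fact p.Prime] [CharP 𝔽 p]
    {T : Set (Fin (d + 1))} (hT : S.IsClosedSubset T)
    (hsub : S.thinResidue ∪ S.pPrimePart p ⊆ T)
    (a k : Fin (d + 1)) {x y : X} (hxy : (x, y) ∈ S.r k) :
    (({z : X | (x, z) ∈ S.r a ∧ ∃ i ∈ T, (z, y) ∈ S.r i}.ncard : 𝔽)) =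
      (S.val a : 𝔽) * (if k ∈ T then 1 else 0) := by
  by_cases hp : p ∣ S.val a
  · have hva : ((S.val a : ℕ) : 𝔽) = 0 := (CharP.cast_eq_zero_iff 𝔽 p (S.val a)).2 hp
    rw [hva, zero_mul]
    rcases Set.eq_empty_or_nonempty
        {z : X | (x, z) ∈ S.r a ∧ ∃ i ∈ T, (z, y) ∈ S.r i} with hE | hNE
    · rw [hE]; simp
    · obtain ⟨z0, hxz0, i, hiT, hz0y⟩ := hNE
      have hZeq : {z : X | (x, z) ∈ S.r a ∧ ∃ i ∈ T, (z, y) ∈ S.r i} =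
          {z : X | (x, z) ∈ S.r a} := by
        refine Set.eq_of_subset_of_subset (fun z hz => hz.1) (fun z hz => ?_)
        obtain ⟨n, hn⟩ := S.exists_rel (z, z0)
        have hnT : n ∈ T := hsub (Or.inl (S.mem_thinResidue_of_same_fiber hz hxz0 hn))
        obtain ⟨m, hm⟩ := S.exists_rel (z, y)
        exact ⟨hz, m, S.mul_mem_of_closed hT hnT hiT hn hz0y hm, hm⟩
      rw [hZeq, S.ncard_fiber, hva]
  · have haT : a ∈ T := hsub (Or.inr hp)
    by_cases hk : k ∈ T
    · have hZeq : {z : X | (x, z) ∈ S.r a ∧ ∃ i ∈ T, (z, y) ∈ S.r i} =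
          {z : X | (x, z) ∈ S.r a} := by
        refine Set.eq_of_subset_of_subset (fun z hz => hz.1) (fun z hz => ?_)
        obtain ⟨m, hm⟩ := S.exists_rel (z, y)
        have hza : (z, x) ∈ S.r (S.star a) := (S.mem_star a (z, x)).2 hz
        exact ⟨hz, m, S.mul_mem_of_closed hT (S.star_mem_of_closed hT haT) hk hza hxy hm, hm⟩
      rw [hZeq, S.ncard_fiber, if_pos hk, mul_one]
    · have hZeq : {z : X | (x, z) ∈ S.r a ∧ ∃ i ∈ T, (z, y) ∈ S.r i} = ∅ := by
        ext z
        simp only [Set.mem_setOf_eq, Set.mem_empty_iff_false, iff_false, not_and]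
        rintro hxz ⟨i, hiT, hzy⟩
        exact hk (S.mul_mem_of_closed hT haT hiT hxz hzy hxy)
      rw [hZeq, if_neg hk, mul_zero]
      simp

lemma sum_adj_apply (𝔽 : Type*) [Field 𝔽] (T : Set (Fin (d + 1))) (z y : X) :
    (∑ i ∈ Finset.univ.filter (· ∈ T), S.adj 𝔽 i) z y
      = if ∃ i ∈ T, (z, y) ∈ S.r i then 1 else 0 := by
  rw [Matrix.sum_apply]
  by_cases h : ∃ i ∈ T, (z, y) ∈ S.r i
  · obtain ⟨i, hiT, hzy⟩ := h
    rw [if_pos ⟨i, hiT, hzy⟩, Finset.sum_eq_single_of_mem i (by simp [hiT])]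
    · simp [adj, hzy]
    · intro j _ hji
      simp only [adj, Matrix.of_apply, ite_eq_right_iff]
      intro hzyj
      exact absurd (S.rel_eq hzyj hzy) hji
  · rw [if_neg h]
    refine Finset.sum_eq_zero fun j hj => ?_
    simp only [Finset.mem_filter] at hj
    simp only [adj, Matrix.of_apply, ite_eq_right_iff]
    intro hzyj
    exact absurd ⟨j, hj.2, hzyj⟩ h

end AssocScheme

/-- Let `T` be a closed subset of `S` with `O^ϑ(S) ∪ S_{p'} ⊆ T` and
`w_T = Σ_{R_i ∈ T} A̅_i`. Then `⟨w_T⟩_𝔽` is a trivial `𝔽S`-submodule of the regular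
`𝔽S`-module. -/
theorem isTrivialVector_sum_of_closed_superset
    {X : Type*} [Fintype X] [Nonempty X] {d : ℕ} (S : AssocScheme X d)
    (𝔽 : Type*) [Field 𝔽] (p : ℕ) [Fact p.Prime] [CharP 𝔽 p]
    (T : Set (Fin (d + 1))) (hT : S.IsClosedSubset T)
    (hsub : S.thinResidue ∪ S.pPrimePart p ⊆ T) :
    S.IsTrivialVector 𝔽 (∑ i ∈ Finset.univ.filter (· ∈ T), S.adj 𝔽 i) := by
  refine ⟨?_, ?_, ?_⟩
  · obtain ⟨t, ht⟩ := hT.1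
    obtain ⟨⟨x, y⟩, hq⟩ := S.r_nonempty t
    intro h0
    have h1 := congrFun (congrFun h0 x) y
    rw [S.sum_adj_apply, if_pos ⟨t, ht, hq⟩] at h1
    exact one_ne_zero (h1.trans rfl)
  · exact Submodule.sum_mem _ fun i _ => Submodule.subset_span ⟨i, rfl⟩
  · intro a
    ext x y
    obtain ⟨k, hk⟩ := S.exists_rel (x, y)
    have hL : (S.adj 𝔽 a * ∑ i ∈ Finset.univ.filter (· ∈ T), S.adj 𝔽 i) x y
        = ∑ z : X, if z ∈ {z : X | (x, z) ∈ S.r a ∧ ∃ i ∈ T, (z, y) ∈ S.r i}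
            then (1 : 𝔽) else 0 := by
      rw [Matrix.mul_apply]
      refine Finset.sum_congr rfl fun z _ => ?_
      rw [S.sum_adj_apply]
      simp only [AssocScheme.adj, Matrix.of_apply, Set.mem_setOf_eq]
      by_cases h1 : (x, z) ∈ S.r a <;> by_cases h2 : ∃ i ∈ T, (z, y) ∈ S.r i <;>
        simp [h1, h2]
    have hcount : (∑ z : X, if z ∈ {z : X | (x, z) ∈ S.r a ∧ ∃ i ∈ T, (z, y) ∈ S.r i}
          then (1 : 𝔽) else 0)
        = (({z : X | (x, z) ∈ S.r a ∧ ∃ i ∈ T, (z, y) ∈ S.r i}.ncard : ℕ) : 𝔽) := by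
      rw [Finset.sum_boole]
      congr 1
      rw [Set.ncard_eq_toFinset_card', Set.toFinset_setOf]
      congr 1
    have hR : ((S.val a : 𝔽) • ∑ i ∈ Finset.univ.filter (· ∈ T), S.adj 𝔽 i) x y
        = (S.val a : 𝔽) * (if k ∈ T then 1 else 0) := by
      rw [Matrix.smul_apply, smul_eq_mul, S.sum_adj_apply]
      congr 1
      by_cases hkT : k ∈ T
      · rw [if_pos ⟨k, hkT, hk⟩, if_pos hkT]
      · rw [if_neg, if_neg hkT]
        rintro ⟨i, hiT, hxy⟩
        exact hkT (S.rel_eq hk hxy ▸ hiT)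
    rw [hL, hcount, hR]
    exact S.core_ncard 𝔽 p hT hsub a k hk
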